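/- Let m be a nonnegative integer, q ∈ ℍ, and (C_n)_{n≥0} a sequence of quaternions with S := ∑_{n=0}^∞ n!·|C_n|² < ∞. Then the series ∑_{n=0}^∞ H_{n,m}(q,q̄)·C_n converges absolutely in ℍ and satisfies the pointwise bound |∑_{n=0}^∞ H_{n,m}(q,q̄)·C_n| ≤ e^{|q|²/2}·(m!·S)^{1/2}. -/

import Mathlib

open MeasureTheory Quaternion

noncomputable section

/-- two-argument quaternionic Hermite polynomial `H_{m,n}(a,b)` -/
def qHermite2 (m n : ℕ) (a b : ℍ[ℝ]) : ℍ[ℝ] :=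
  ∑ j ∈ Finset.range (min m n + 1),
    (((-1 : ℝ) ^ j * (Nat.factorial m * Nat.factorial n) /
        (Nat.factorial j * (Nat.factorial (m - j) * Nat.factorial (n - j)))) : ℝ) •
      (a ^ (m - j) * b ^ (n - j))

/-- quaternionic Hermite polynomial `H_{m,n}(q, q̄)` -/
def qHermite (m n : ℕ) (q : ℍ[ℝ]) : ℍ[ℝ] := qHermite2 m n q (star q)

/-!
With `f n = ‖H_{n,m}(q,q̄)‖ / √n!` and `g n = √n! ‖C_n‖`, the bound is the Cauchy–Schwarz
inequality `∑ f g ≤ (∑ f²)^{1/2} (∑ g²)^{1/2}`, given the identity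
`∑ₙ ‖H_{n,m}(q,q̄)‖² / n! = m! e^{|q|²}`.

For the identity, consider the pairing `⟨a, b⟩ = ∑ₙ H_{n,a} H_{b,n} / n!`; since
`H_{b,n} = conj H_{n,b}`, the diagonal `⟨m, m⟩` is the series above, and
`⟨0, 0⟩ = ∑ₙ |q|^{2n} / n!`. The recurrence `H_{m+1,n} = q H_{m,n} - n H_{m,n-1}`, applied to
`H_{b+1,n}` and, after shifting the summation index, to `H_{n+1,a+1}`, gives
`⟨a+1, b+1⟩ = (a+1) ⟨a, b⟩`: the terms carrying a factor `q` cancel because `q` commutes with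
every `H_{m,n}(q,q̄)`. All series converge since
`‖H_{n,j}(q,q̄)‖ ≤ (|q| + m + 1)^{n+m}` for `j ≤ m`, by induction on `n` from the same recurrence.
-/

open scoped Nat

def hermiteCoeff (m n j : ℕ) : ℝ := (-1) ^ j * j ! * m.choose j * n.choose j

lemma hermiteCoeff_zero (m n : ℕ) : hermiteCoeff m n 0 = 1 := by simp [hermiteCoeff]

lemma hermiteCoeff_eq_zero {m n j : ℕ} (h : min m n < j) : hermiteCoeff m n j = 0 := by
  rcases min_lt_iff.1 h with h | h <;> simp [hermiteCoeff, Nat.choose_eq_zero_of_lt h]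

lemma hermiteCoeff_succ_sub_succ (m n j : ℕ) :
    hermiteCoeff m n (j + 1) - hermiteCoeff (m + 1) n (j + 1) = n * hermiteCoeff m (n - 1) j := by
  have h : (n : ℝ) * (n - 1).choose j = n.choose (j + 1) * (j + 1) := by
    cases n with
    | zero => simp
    | succ k => exact_mod_cast Nat.add_one_mul_choose_eq k j
  simp only [hermiteCoeff, Nat.choose_succ_succ m j, Nat.factorial_succ, pow_succ]
  push_cast
  linear_combination (-(-1 : ℝ) ^ j * j ! * m.choose j) * h

lemma qHermite2_eq_sum_range {m n K : ℕ} (hK : min m n < K) (a b : ℍ[ℝ]) :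
    qHermite2 m n a b = ∑ j ∈ Finset.range K, hermiteCoeff m n j • (a ^ (m - j) * b ^ (n - j)) := by
  rw [qHermite2]
  refine Finset.sum_subset_zero_on_sdiff (Finset.range_subset_range.2 hK) (fun j hj => ?_)
    (fun j hj => ?_)
  · simp only [Finset.mem_sdiff, Finset.mem_range] at hj
    rw [hermiteCoeff_eq_zero (by omega), zero_smul]
  · simp only [Finset.mem_range, Nat.lt_succ_iff, le_min_iff] at hj
    rw [hermiteCoeff, Nat.cast_choose ℝ hj.1, Nat.cast_choose ℝ hj.2]
    congr 1
    field_simp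

theorem qHermite2_succ_left (m n : ℕ) (a b : ℍ[ℝ]) :
    qHermite2 (m + 1) n a b = a * qHermite2 m n a b - (n : ℝ) • qHermite2 m (n - 1) a b := by
  set X : ℕ → ℍ[ℝ] := fun j => a ^ (m + 1 - j) * b ^ (n - j)
  have hmul : ∀ j, a * (hermiteCoeff m n j • (a ^ (m - j) * b ^ (n - j)))
      = hermiteCoeff m n j • X j := by
    intro j
    rcases le_or_gt j m with h | h
    · rw [mul_smul_comm, ← mul_assoc, ← pow_succ' a (m - j), ← Nat.sub_add_comm h]
    · simp [hermiteCoeff_eq_zero (min_lt_of_left_lt h)]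
  have hshift : ∀ j, (n : ℝ) • (hermiteCoeff m (n - 1) j • (a ^ (m - j) * b ^ (n - 1 - j)))
      = (hermiteCoeff m n (j + 1) - hermiteCoeff (m + 1) n (j + 1)) • X (j + 1) := by
    intro j
    rw [smul_smul, hermiteCoeff_succ_sub_succ, Nat.sub_sub, add_comm 1 j]
    simp only [X, Nat.add_sub_add_right]
  rw [qHermite2_eq_sum_range (K := m + 2) (by omega),
    qHermite2_eq_sum_range (K := m + 2) (by omega), qHermite2_eq_sum_range (K := m + 1) (by omega), Finset.mul_sum, Finset.smul_sum]
  simp only [hmul, hshift, sub_smul, Finset.sum_sub_distrib]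
  rw [Finset.sum_range_succ' (fun j => hermiteCoeff m n j • X j),
    Finset.sum_range_succ' (fun j => hermiteCoeff (m + 1) n j • X j)]
  simp only [hermiteCoeff_zero]
  abel

lemma qHermite_succ_left (m n : ℕ) (q : ℍ[ℝ]) :
    qHermite (m + 1) n q = q * qHermite m n q - (n : ℝ) • qHermite m (n - 1) q :=
  qHermite2_succ_left m n q (star q)

lemma qHermite_zero_left (n : ℕ) (q : ℍ[ℝ]) : qHermite 0 n q = star q ^ n := by
  simp [qHermite, qHermite2, Nat.factorial_ne_zero]

lemma star_qHermite (m n : ℕ) (q : ℍ[ℝ]) : star (qHermite m n q) = qHermite n m q := by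
  simp only [qHermite, qHermite2, star_sum, Quaternion.star_smul, star_mul, star_pow, star_star,
    Nat.min_comm m n]
  refine Finset.sum_congr rfl fun j _ => ?_
  congr 1
  ring

lemma qHermite_zero_right (n : ℕ) (q : ℍ[ℝ]) : qHermite n 0 q = q ^ n := by
  rw [← star_qHermite, qHermite_zero_left, star_pow, star_star]

lemma norm_qHermite_comm (m n : ℕ) (q : ℍ[ℝ]) : ‖qHermite m n q‖ = ‖qHermite n m q‖ := by
  rw [← star_qHermite, Quaternion.norm_star]

lemma commute_self_qHermite (m n : ℕ) (q : ℍ[ℝ]) : Commute q (qHermite m n q) :=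
  Commute.sum_right _ _ _ fun _ _ =>
    (((Commute.refl q).pow_right _).mul_right
      ((star_comm_self (x := q)).symm.pow_right _)).smul_right _

lemma norm_qHermite_le (q : ℍ[ℝ]) {j m : ℕ} (hj : j ≤ m) (n : ℕ) :
    ‖qHermite n j q‖ ≤ (‖q‖ + m + 1) ^ (n + m) := by
  set y := ‖q‖ + m + 1
  have hy : 1 ≤ y := le_add_of_nonneg_left (by positivity)
  induction n generalizing j with
  | zero =>
    rw [qHermite_zero_left, norm_pow, Quaternion.norm_star, zero_add]
    exact (pow_le_pow_left₀ (norm_nonneg q) (by simp only [y]; linarith) j).trans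
      (pow_le_pow_right₀ hy hj)
  | succ n ih =>
    rw [qHermite_succ_left]
    calc ‖q * qHermite n j q - (j : ℝ) • qHermite n (j - 1) q‖
        ≤ ‖q‖ * ‖qHermite n j q‖ + j * ‖qHermite n (j - 1) q‖ := by
          refine (norm_sub_le _ _).trans ?_
          rw [norm_mul, norm_smul, Real.norm_natCast]
      _ ≤ ‖q‖ * y ^ (n + m) + m * y ^ (n + m) := by
          gcongr
          · exact ih hj
          · exact ih (by omega)
      _ ≤ y ^ (n + 1 + m) := by
          rw [add_right_comm, pow_succ', ← add_mul]
          gcongr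
          simp only [y]; linarith

def qHermiteFockTerm (q : ℍ[ℝ]) (a b n : ℕ) : ℍ[ℝ] :=
  ((n ! : ℝ)⁻¹) • (qHermite n a q * qHermite b n q)

lemma summable_qHermiteFockTerm (q : ℍ[ℝ]) (a b : ℕ) : Summable (qHermiteFockTerm q a b) := by
  have ha := norm_qHermite_le q (Nat.le_add_right a b)
  have hb := norm_qHermite_le q (Nat.le_add_left b a)
  generalize ‖q‖ + ((a + b : ℕ) : ℝ) + 1 = y at ha hb
  refine Summable.of_norm_bounded
    ((Real.summable_pow_div_factorial (y ^ 2)).mul_left (y ^ (2 * (a + b)))) fun n => ?_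
  calc ‖qHermiteFockTerm q a b n‖
      = (n ! : ℝ)⁻¹ * (‖qHermite n a q‖ * ‖qHermite b n q‖) := by
        rw [qHermiteFockTerm, norm_smul, norm_mul, Real.norm_of_nonneg (by positivity)]
    _ ≤ (n ! : ℝ)⁻¹ * (y ^ (n + (a + b)) * y ^ (n + (a + b))) := by
        rw [norm_qHermite_comm b]
        gcongr
        exacts [(norm_nonneg _).trans (ha n), ha n, hb n]
    _ = y ^ (2 * (a + b)) * ((y ^ 2) ^ n / n !) := by ring

lemma qHermiteFockTerm_zero_zero (q : ℍ[ℝ]) (n : ℕ) :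
    qHermiteFockTerm q 0 0 n = (((‖q‖ ^ 2) ^ n / n ! : ℝ) : ℍ[ℝ]) := by
  rw [qHermiteFockTerm, qHermite_zero_right, qHermite_zero_left,
    ← (star_comm_self (x := q)).symm.mul_pow, Quaternion.self_mul_star,
    Quaternion.normSq_eq_norm_mul_self, ← sq, ← Quaternion.coe_pow, Quaternion.smul_coe,
    inv_mul_eq_div]

lemma qHermiteFockTerm_self (q : ℍ[ℝ]) (m n : ℕ) :
    qHermiteFockTerm q m m n = ((‖qHermite n m q‖ ^ 2 / n ! : ℝ) : ℍ[ℝ]) := by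
  rw [qHermiteFockTerm, ← star_qHermite n m q, Quaternion.self_mul_star,
    Quaternion.normSq_eq_norm_mul_self, Quaternion.smul_coe, sq, inv_mul_eq_div]

lemma HasSum.qHermiteFockTerm_succ_succ {q : ℍ[ℝ]} {a b : ℕ} {S : ℍ[ℝ]}
    (h : HasSum (qHermiteFockTerm q a b) S) :
    HasSum (qHermiteFockTerm q (a + 1) (b + 1)) (((a + 1 : ℕ) : ℝ) • S) := by
  set U := fun n => q * qHermiteFockTerm q (a + 1) b n
  set V : ℕ → ℍ[ℝ] := fun n => ((n : ℝ) * (n ! : ℝ)⁻¹) •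
    (qHermite n (a + 1) q * qHermite b (n - 1) q)
  have hU : HasSum U (q * ∑' n, qHermiteFockTerm q (a + 1) b n) :=
    (summable_qHermiteFockTerm q (a + 1) b).hasSum.mul_left q
  have hV_succ : ∀ n, V (n + 1) = U n - (((a + 1 : ℕ) : ℝ)) • qHermiteFockTerm q a b n := by
    intro n
    have hfac : ((n + 1 : ℕ) : ℝ) * ((n + 1)! : ℝ)⁻¹ = (n ! : ℝ)⁻¹ := by
      rw [Nat.factorial_succ, Nat.cast_mul, mul_inv, ← mul_assoc, mul_inv_cancel₀ (by positivity),
        one_mul]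
    simp only [V, U, qHermiteFockTerm, hfac, Nat.add_sub_cancel, qHermite_succ_left n (a + 1)]
    rw [sub_mul, smul_sub, mul_smul_comm, mul_assoc, smul_mul_assoc, smul_comm]
  have hV : HasSum V (q * ∑' n, qHermiteFockTerm q (a + 1) b n - ((a + 1 : ℕ) : ℝ) • S) := by
    rw [← hasSum_nat_add_iff' 1]
    simpa [V, hV_succ] using hU.sub (h.const_smul _)
  have hsplit : ∀ n, qHermiteFockTerm q (a + 1) (b + 1) n = U n - V n := by
    intro n
    simp only [U, V, qHermiteFockTerm, qHermite_succ_left b n]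
    rw [mul_sub, ← mul_assoc, ← (commute_self_qHermite n (a + 1) q).eq, mul_assoc, mul_smul_comm,
      smul_sub, mul_smul_comm, smul_smul, mul_comm]
  simpa only [← hsplit, sub_sub_cancel] using hU.sub hV

lemma hasSum_qHermiteFockTerm_self (q : ℍ[ℝ]) (m : ℕ) :
    HasSum (qHermiteFockTerm q m m) ((m ! * Real.exp (‖q‖ ^ 2) : ℝ) : ℍ[ℝ]) := by
  induction m with
  | zero =>
    rw [funext (qHermiteFockTerm_zero_zero q), Quaternion.hasSum_coe, Nat.factorial_zero,
      Nat.cast_one, one_mul, Real.exp_eq_exp_ℝ]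
    exact NormedSpace.expSeries_div_hasSum_exp (‖q‖ ^ 2 : ℝ)
  | succ m ih =>
    convert ih.qHermiteFockTerm_succ_succ using 1
    rw [Quaternion.smul_coe, Nat.factorial_succ]
    congr 1
    push_cast
    ring

theorem hasSum_norm_qHermite_sq_div_factorial (q : ℍ[ℝ]) (m : ℕ) :
    HasSum (fun n => ‖qHermite n m q‖ ^ 2 / n !) (m ! * Real.exp (‖q‖ ^ 2)) := by
  rw [← Quaternion.hasSum_coe, ← funext (qHermiteFockTerm_self q m)]
  exact hasSum_qHermiteFockTerm_self q m

theorem Real.summable_mul_and_tsum_mul_le_sqrt_mul_sqrt {ι : Type*} {w f g : ι → ℝ}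
    (hw : ∀ i, 0 < w i) (hf : ∀ i, 0 ≤ f i) (hg : ∀ i, 0 ≤ g i)
    (hf_sum : Summable fun i => f i ^ 2 / w i) (hg_sum : Summable fun i => w i * g i ^ 2) :
    (Summable fun i => f i * g i) ∧
      ∑' i, f i * g i ≤ √(∑' i, f i ^ 2 / w i) * √(∑' i, w i * g i ^ 2) := by
  have hfg : ∀ i, f i / √(w i) * (√(w i) * g i) = f i * g i := fun i => by
    field_simp [(Real.sqrt_pos.2 (hw i)).ne']
  have hf2 : ∀ i, (f i / √(w i)) ^ (2 : ℝ) = f i ^ 2 / w i := fun i => by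
    rw [Real.rpow_two, div_pow, Real.sq_sqrt (hw i).le]
  have hg2 : ∀ i, (√(w i) * g i) ^ (2 : ℝ) = w i * g i ^ 2 := fun i => by
    rw [Real.rpow_two, mul_pow, Real.sq_sqrt (hw i).le]
  have := summable_and_inner_le_Lp_mul_Lq_tsum_of_nonneg Real.HolderConjugate.two_two
    (f := fun i => f i / √(w i)) (g := fun i => √(w i) * g i)
    (fun i => div_nonneg (hf i) (Real.sqrt_nonneg _))
    (fun i => mul_nonneg (Real.sqrt_nonneg _) (hg i))
    (by simpa only [hf2] using hf_sum) (by simpa only [hg2] using hg_sum)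
  simpa only [hfg, hf2, hg2, ← Real.sqrt_eq_rpow] using this

/-- If `S = ∑ n!·|C_n|² < ∞` then `∑ H_{n,m}(q,q̄)·C_n` converges
absolutely and `|∑ H_{n,m}(q,q̄)·C_n| ≤ e^{|q|²/2}·(m!·S)^{1/2}`. -/
theorem stmt10 (m : ℕ) (q : ℍ[ℝ]) (C : ℕ → ℍ[ℝ])
    (hS : Summable fun n : ℕ => (Nat.factorial n : ℝ) * ‖C n‖ ^ 2) :
    Summable (fun n : ℕ => ‖qHermite n m q * C n‖) ∧
      ‖∑' n : ℕ, qHermite n m q * C n‖ ≤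
        Real.exp (‖q‖ ^ 2 / 2) *
          Real.sqrt (Nat.factorial m * ∑' n : ℕ, (Nat.factorial n : ℝ) * ‖C n‖ ^ 2) := by
  have hH := hasSum_norm_qHermite_sq_div_factorial q m
  obtain ⟨hsum, hle⟩ := Real.summable_mul_and_tsum_mul_le_sqrt_mul_sqrt
    (fun n => Nat.cast_pos.2 (Nat.factorial_pos n)) (fun n => norm_nonneg (qHermite n m q))
    (fun n => norm_nonneg (C n)) hH.summable hS
  simp only [← norm_mul, hH.tsum_eq] at hsum hle
  refine ⟨hsum, ?_⟩
  calc ‖∑' n, qHermite n m q * C n‖ ≤ ∑' n, ‖qHermite n m q * C n‖ := norm_tsum_le_tsum_norm hsum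
    _ ≤ √(m ! * Real.exp (‖q‖ ^ 2)) * √(∑' n, (n ! : ℝ) * ‖C n‖ ^ 2) := hle
    _ = Real.exp (‖q‖ ^ 2 / 2) * √(m ! * ∑' n, (n ! : ℝ) * ‖C n‖ ^ 2) := by
      rw [Real.exp_half, Real.sqrt_mul (Nat.cast_nonneg _), Real.sqrt_mul (Nat.cast_nonneg _)]
      ring
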